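/- Let α, β > 0 and 0 < μ < α. Then for every n ∈ ℕ and every x ∈ [0,1], ∫_0^1 R_n^{α,β}(1−(1−x)z) · z^{β−1}(1−z)^{μ−1}/B(β,μ) dz = R_n^{α−μ, β+μ}(x). -/

import Mathlib

open MeasureTheory Finset

noncomputable section

/-- Rising factorial `(a)_(n) = a (a+1) ⋯ (a+n−1)`. -/
def rf (a : ℝ) : ℕ → ℝ
  | 0 => 1
  | n + 1 => rf a n * (a + n)

/-- Falling factorial `N_[n] = N (N−1) ⋯ (N−n+1)` of a natural number, as a real. -/
def ff (N n : ℕ) : ℝ := (N.descFactorial n : ℝ)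

/-- Triangular array `a^θ_{n,m}` (meaningful for `0 ≤ m ≤ n`). -/
def acoef (θ : ℝ) (n m : ℕ) : ℝ :=
  if n = 0 then 1
  else (θ + 2 * n - 1) * (-1 : ℝ) ^ (n - m) * rf (θ + m) (n - 1) /
    ((m.factorial : ℝ) * ((n - m).factorial : ℝ))

/-- The simplex `Δ_{d−1} = {x ∈ [0,1]^d : x₁ + ⋯ + x_d = 1}`. -/
def simplex (d : ℕ) : Set (Fin d → ℝ) :=
  {x | (∀ i, 0 ≤ x i ∧ x i ≤ 1) ∧ ∑ i, x i = 1}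

/-- `ξ^α_m(x,y)`. -/
def xiK {d : ℕ} (α : Fin d → ℝ) (m : ℕ) (x y : Fin d → ℝ) : ℝ :=
  ∑ l ∈ Finset.Nat.antidiagonalTuple d m,
    ((m.factorial : ℝ) / ∏ i, ((l i).factorial : ℝ)) *
      (rf (∑ i, α i) m / ∏ i, rf (α i) (l i)) * ∏ i, (x i * y i) ^ l i

/-- Jacobi polynomial kernel `Q^α_n(x,y)`. -/
def Qker {d : ℕ} (α : Fin d → ℝ) (n : ℕ) (x y : Fin d → ℝ) : ℝ :=
  ∑ m ∈ Finset.range (n + 1), acoef (∑ i, α i) n m * xiK α m x y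

/-- Dirichlet–multinomial pmf `DM_α(l; m)`. -/
def DM {d : ℕ} (α : Fin d → ℝ) (l : Fin d → ℕ) (m : ℕ) : ℝ :=
  ((m.factorial : ℝ) / ∏ i, ((l i).factorial : ℝ)) *
    (∏ i, rf (α i) (l i)) / rf (∑ i, α i) m

/-- `ξ^{H,α}_m(r,s)`. -/
def xiH {d : ℕ} (α : Fin d → ℝ) (m : ℕ) (r s : Fin d → ℕ) : ℝ :=
  ∑ l ∈ Finset.Nat.antidiagonalTuple d m,
    DM (fun i => α i + r i) l m * DM (fun i => α i + s i) l m / DM α l m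

/-- Hahn polynomial kernel `H^α_n(r,s)` for `|r| = |s| = N`. -/
def Hker {d : ℕ} (α : Fin d → ℝ) (N n : ℕ) (r s : Fin d → ℕ) : ℝ :=
  (rf ((∑ i, α i) + N) n / ff N n) *
    ∑ m ∈ Finset.range (n + 1), acoef (∑ i, α i) n m * xiH α m r s

/-- `χ^{H,α}_m(r,s)`. -/
def chiH {d : ℕ} (α : Fin d → ℝ) (N m : ℕ) (r s : Fin d → ℕ) : ℝ :=
  ∑ l ∈ Finset.Nat.antidiagonalTuple d m,
    (1 / DM α l m) *
      (((m.factorial : ℝ) / ∏ i, ((l i).factorial : ℝ)) * (∏ i, ff (r i) (l i)) / ff N m) *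
      (((m.factorial : ℝ) / ∏ i, ((l i).factorial : ℝ)) * (∏ i, ff (s i) (l i)) / ff N m)

/-- Normalized Jacobi polynomial `R_n^{a,b}` on `[0,1]`. -/
def Rpoly (a b : ℝ) (n : ℕ) (x : ℝ) : ℝ :=
  ∑ k ∈ Finset.range (n + 1),
    (-1 : ℝ) ^ k * (n.choose k : ℝ) * (rf ((n : ℝ) + (a + b) - 1) k / rf b k) * (1 - x) ^ k

/-- `ζ_n^{a,b}`. -/
def zeta (a b : ℝ) (n : ℕ) : ℝ :=
  if n = 0 then 1
  else ((a + b) + 2 * n - 1) * rf (a + b) (n - 1) * rf b n / ((n.factorial : ℝ) * rf a n)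

/-- Hahn polynomial `h_n^{a,b}(r; N)`. -/
def hahnPoly (a b : ℝ) (N n r : ℕ) : ℝ :=
  ∑ k ∈ Finset.range (n + 1),
    (-1 : ℝ) ^ k * (n.choose k : ℝ) * rf ((n : ℝ) + (a + b) - 1) k * ff r k /
      (rf a k * ff N k)

/-- `u^{a,b}_{N,n}`. -/
def uCoef (a b : ℝ) (N n : ℕ) : ℝ :=
  if n = 0 then 1
  else (N.choose n : ℝ) * ((a + b) + 2 * n - 1) * rf (a + b) (n - 1) * rf a n /
    (rf ((a + b) + N) n * rf b n)

/-- Beta function `B(a,b) = Γ(a)Γ(b)/Γ(a+b)`. -/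
def BetaFn (a b : ℝ) : ℝ := Real.Gamma a * Real.Gamma b / Real.Gamma (a + b)

/-- Condition (G) on the parameter vector `α`. -/
def CondG {d : ℕ} (α : Fin d → ℝ) : Prop :=
  ∀ j : Fin d, 0 < (j : ℕ) →
    (α j ≤ ∑ i ∈ Finset.univ.filter fun i : Fin d => (i : ℕ) < (j : ℕ), α i) ∧
      (1 / 2 ≤ α j ∨ 2 ≤ ∑ i ∈ Finset.univ.filter fun i : Fin d => (i : ℕ) ≤ (j : ℕ), α i)

/-- Density of the Dirichlet distribution in the coordinates `(u₁, …, u_{d−1})`. -/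
def dirichletDensity (k : ℕ) (α : Fin (k + 1) → ℝ) (u : Fin k → ℝ) : ℝ :=
  if (∀ i, 0 < u i ∧ u i < 1) ∧ ∑ i, u i < 1 then
    (Real.Gamma (∑ i, α i) / ∏ i, Real.Gamma (α i)) *
      (∏ i : Fin k, u i ^ (α (Fin.castSucc i) - 1)) * (1 - ∑ i, u i) ^ (α (Fin.last k) - 1)
  else 0

/-- The Dirichlet probability measure `D_α` on `Δ_{d−1} ⊆ ℝ^d`, `d = k + 1`. -/
def dirichlet (k : ℕ) (α : Fin (k + 1) → ℝ) : Measure (Fin (k + 1) → ℝ) :=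
  ((volume : Measure (Fin k → ℝ)).withDensity fun u =>
      ENNReal.ofReal (dirichletDensity k α u)).map fun u => Fin.snoc u (1 - ∑ i, u i)

/-
Expanding `R_n^{a,b}(1 - (1-x) z)` in powers of `(1-x) z`, the `k`-th monomial integrates against
the Beta(b, μ) density to `(1-x)^k (b)_k / (b+μ)_k`. This replaces the denominator `(b)_k` of
`R_n^{a,b}` by `(b+μ)_k` and leaves `θ = a + b` unchanged, which is exactly `R_n^{a-μ, b+μ}(x)`.
-/

open Set

lemma BetaFn_eq_beta : BetaFn = ProbabilityTheory.beta := rfl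

lemma rf_pos {a : ℝ} (ha : 0 < a) (k : ℕ) : 0 < rf a k := by
  induction k with
  | zero => simp [rf]
  | succ k ih => exact mul_pos ih (by positivity)

lemma Gamma_add_natCast_eq_rf_mul {b : ℝ} (hb : 0 < b) (k : ℕ) :
    Real.Gamma (b + k) = rf b k * Real.Gamma b := by
  induction k with
  | zero => simp [rf]
  | succ k ih =>
    rw [Nat.cast_succ, ← add_assoc, Real.Gamma_add_one (by positivity), ih, rf]
    ring

lemma BetaFn_add_natCast {b μ : ℝ} (hb : 0 < b) (hμ : 0 < μ) (k : ℕ) :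
    BetaFn (b + k) μ = rf b k / rf (b + μ) k * BetaFn b μ := by
  have hbμ : 0 < b + μ := add_pos hb hμ
  have hΓ : Real.Gamma (b + k + μ) = rf (b + μ) k * Real.Gamma (b + μ) := by
    rw [add_right_comm, Gamma_add_natCast_eq_rf_mul hbμ]
  have := (rf_pos hbμ k).ne'
  have := (Real.Gamma_pos_of_pos hbμ).ne'
  rw [BetaFn, BetaFn, Gamma_add_natCast_eq_rf_mul hb, hΓ]
  field_simp

lemma betaIntegrand_ofReal (u v : ℝ) {z : ℝ} (hz : z ∈ Ioc (0 : ℝ) 1) :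
    (z : ℂ) ^ ((u : ℂ) - 1) * (1 - (z : ℂ)) ^ ((v : ℂ) - 1) =
      ((z ^ (u - 1) * (1 - z) ^ (v - 1) : ℝ) : ℂ) := by
  rw [Complex.ofReal_mul, Complex.ofReal_cpow hz.1.le, Complex.ofReal_cpow (by linarith [hz.2])]
  push_cast
  rfl

lemma integrableOn_betaIntegrand {u v : ℝ} (hu : 0 < u) (hv : 0 < v) :
    IntegrableOn (fun z : ℝ => z ^ (u - 1) * (1 - z) ^ (v - 1)) (Ioc 0 1) := by
  have hC : IntegrableOn
      (fun z : ℝ => ((z : ℂ) ^ ((u : ℂ) - 1) * (1 - (z : ℂ)) ^ ((v : ℂ) - 1)).re)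
      (Ioc 0 1) :=
    (Complex.betaIntegral_convergent (u := u) (v := v) (by simpa) (by simpa)).1.re
  refine hC.congr_fun (fun z hz => ?_) measurableSet_Ioc
  simp only [betaIntegrand_ofReal u v hz, Complex.ofReal_re]

lemma integral_betaIntegrand {u v : ℝ} (hu : 0 < u) (hv : 0 < v) :
    ∫ z in Ioc (0 : ℝ) 1, z ^ (u - 1) * (1 - z) ^ (v - 1) = BetaFn u v := by
  have hC : Complex.betaIntegral u v =
      ((∫ z in Ioc (0 : ℝ) 1, z ^ (u - 1) * (1 - z) ^ (v - 1) : ℝ) : ℂ) := by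
    rw [Complex.betaIntegral, intervalIntegral.integral_of_le zero_le_one,
      setIntegral_congr_fun measurableSet_Ioc fun z hz => betaIntegrand_ofReal u v hz]
    exact integral_ofReal
  rw [BetaFn_eq_beta, ProbabilityTheory.beta_eq_betaIntegralReal u v hu hv, hC, Complex.ofReal_re]

lemma pow_mul_betaDensity_eq_rpow {b μ : ℝ} (k : ℕ) {z : ℝ} (hz : z ∈ Ioc (0 : ℝ) 1) :
    z ^ k * (z ^ (b - 1) * (1 - z) ^ (μ - 1) / BetaFn b μ) =
      z ^ (b + k - 1) * (1 - z) ^ (μ - 1) / BetaFn b μ := by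
  rw [← Real.rpow_natCast, add_sub_right_comm, Real.rpow_add hz.1]
  ring

lemma integrableOn_pow_mul_betaDensity {b μ : ℝ} (hb : 0 < b) (hμ : 0 < μ) (k : ℕ) :
    IntegrableOn (fun z => z ^ k * (z ^ (b - 1) * (1 - z) ^ (μ - 1) / BetaFn b μ)) (Ioc 0 1) :=
  IntegrableOn.congr_fun ((integrableOn_betaIntegrand (by positivity) hμ).div_const _)
    (fun _ hz => (pow_mul_betaDensity_eq_rpow k hz).symm) measurableSet_Ioc

lemma integral_pow_mul_betaDensity {b μ : ℝ} (hb : 0 < b) (hμ : 0 < μ) (k : ℕ) :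
    ∫ z in Ioc (0 : ℝ) 1, z ^ k * (z ^ (b - 1) * (1 - z) ^ (μ - 1) / BetaFn b μ) =
      rf b k / rf (b + μ) k := by
  have hB : BetaFn b μ ≠ 0 := BetaFn_eq_beta ▸ (ProbabilityTheory.beta_pos hb hμ).ne'
  rw [setIntegral_congr_fun measurableSet_Ioc fun _ hz => pow_mul_betaDensity_eq_rpow k hz,
    integral_div, integral_betaIntegrand (by positivity) hμ, BetaFn_add_natCast hb hμ,
    mul_div_assoc, div_self hB, mul_one]

lemma Rpoly_one_sub_mul_mul (a b : ℝ) (n : ℕ) (y z w : ℝ) :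
    Rpoly a b n (1 - y * z) * w =
      ∑ k ∈ range (n + 1),
        (-1 : ℝ) ^ k * n.choose k * (rf (n + (a + b) - 1) k / rf b k) * y ^ k * (z ^ k * w) := by
  rw [Rpoly, Finset.sum_mul]
  refine Finset.sum_congr rfl fun k _ => ?_
  rw [sub_sub_cancel, mul_pow]
  ring

theorem stmt_9_general (a b μ : ℝ) (hb : 0 < b) (hμ0 : 0 < μ)
    (n : ℕ) (x : ℝ) :
    (∫ z in Set.Icc (0 : ℝ) 1,
        Rpoly a b n (1 - (1 - x) * z) * (z ^ (b - 1) * (1 - z) ^ (μ - 1) / BetaFn b μ)) =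
      Rpoly (a - μ) (b + μ) n x := by
  rw [integral_Icc_eq_integral_Ioc]
  simp_rw [Rpoly_one_sub_mul_mul]
  rw [integral_finsetSum _ fun k _ => (integrableOn_pow_mul_betaDensity hb hμ0 k).const_mul _]
  simp_rw [integral_const_mul, integral_pow_mul_betaDensity hb hμ0]
  rw [Rpoly]
  refine Finset.sum_congr rfl fun k _ => ?_
  have := (rf_pos hb k).ne'
  rw [show (n : ℝ) + (a - μ + (b + μ)) - 1 = n + (a + b) - 1 by ring]
  field_simp

/-- first Beta-integral identity for normalized Jacobi polynomials. -/
theorem stmt_9 (a b μ : ℝ) (ha : 0 < a) (hb : 0 < b) (hμ0 : 0 < μ) (hμa : μ < a)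
    (n : ℕ) (x : ℝ) (hx : x ∈ Set.Icc (0 : ℝ) 1) :
    (∫ z in Set.Icc (0 : ℝ) 1,
        Rpoly a b n (1 - (1 - x) * z) * (z ^ (b - 1) * (1 - z) ^ (μ - 1) / BetaFn b μ)) =
      Rpoly (a - μ) (b + μ) n x :=
  stmt_9_general a b μ hb hμ0 n x
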